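/- Let N be a positive natural number and M an N×N matrix over the bicomplex numbers 𝔹ℂ. Let Q = [[0, M̄],[M, 0]], R = [[Re^i(M), −Im^i(M)],[−Im^i(M), −Re^i(M)]], and F = [[I, iI],[I, −iI]] be 2N×2N block matrices over 𝔹ℂ (I the N×N identity). Then F is invertible with F⁻¹ = [[(1/2)I, (1/2)I],[−(i/2)I, (i/2)I]], and Q = F·R·F⁻¹. -/
import Mathlib


open scoped TensorProduct

/-- The bicomplex numbers `𝔹ℂ = ℂ ⊗[ℝ] ℂ`, a commutative ℝ-algebra. -/
abbrev BC : Type := ℂ ⊗[ℝ] ℂ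

/-- The first imaginary unit `i` of the bicomplex numbers. -/
noncomputable def BC.i : BC := Complex.I ⊗ₜ[ℝ] (1 : ℂ)

/-- The second imaginary unit `j` of the bicomplex numbers. -/
noncomputable def BC.j : BC := (1 : ℂ) ⊗ₜ[ℝ] Complex.I

/-- Bar-conjugation `z₁ + j z₂ ↦ z̄₁ + j z̄₂` (complex conjugation in `i`),
a ring (indeed ℝ-algebra) homomorphism of `𝔹ℂ`. -/
noncomputable def BC.bar : BC →ₐ[ℝ] BC :=
  Algebra.TensorProduct.map Complex.conjAe.toAlgHom (AlgHom.id ℝ ℂ)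

/-- The subalgebra `ℂ(j) = {x₁ + j x₂ : x₁, x₂ ∈ ℝ}` of `𝔹ℂ`,
realized as the range of the canonical map `ℂ → ℂ ⊗[ℝ] ℂ`, `z ↦ 1 ⊗ z`. -/
noncomputable def BC.Cj : Subalgebra ℝ BC :=
  (Algebra.TensorProduct.includeRight : ℂ →ₐ[ℝ] BC).range

/-- `Re^i(b) = (b + b̄)/2`. -/
noncomputable def BC.ReI (b : BC) : BC := (2 : ℝ)⁻¹ • (b + BC.bar b)

/-- `Im^i(b) = (b - b̄)/(2i)`; since `(2i)⁻¹ = -i/2`, this equals `((b̄ - b) * i)/2`. -/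
noncomputable def BC.ImI (b : BC) : BC := (2 : ℝ)⁻¹ • ((BC.bar b - b) * BC.i)


section AuxGeneric

variable {R : Type*} [CommRing R] [Algebra ℝ R] {N : ℕ}

private lemma FG_eq_one_aux (ι : R) (hι : ι * ι = -1) :
    (Matrix.fromBlocks 1 (ι • (1 : Matrix (Fin N) (Fin N) R)) 1
      (-(ι • (1 : Matrix (Fin N) (Fin N) R)))) *
    (Matrix.fromBlocks ((2 : ℝ)⁻¹ • (1 : Matrix (Fin N) (Fin N) R))
      ((2 : ℝ)⁻¹ • (1 : Matrix (Fin N) (Fin N) R))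
      (-((2 : ℝ)⁻¹ • (ι • (1 : Matrix (Fin N) (Fin N) R))))
      ((2 : ℝ)⁻¹ • (ι • (1 : Matrix (Fin N) (Fin N) R)))) = 1 := by
  rw [Matrix.fromBlocks_multiply, ← Matrix.fromBlocks_one]
  simp only [Matrix.smul_mul, Matrix.mul_smul, Matrix.mul_one, Matrix.one_mul,
    Matrix.mul_neg, Matrix.neg_mul, smul_neg, neg_neg]
  simp only [smul_comm ι ((2:ℝ)⁻¹), smul_smul ι ι, hι]
  simp only [neg_smul, one_smul, smul_neg, neg_neg, add_neg_cancel, neg_add_cancel]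
  congr 1 <;> rw [← add_smul] <;> norm_num

private lemma GF_eq_one_aux (ι : R) (hι : ι * ι = -1) :
    (Matrix.fromBlocks ((2 : ℝ)⁻¹ • (1 : Matrix (Fin N) (Fin N) R))
      ((2 : ℝ)⁻¹ • (1 : Matrix (Fin N) (Fin N) R))
      (-((2 : ℝ)⁻¹ • (ι • (1 : Matrix (Fin N) (Fin N) R))))
      ((2 : ℝ)⁻¹ • (ι • (1 : Matrix (Fin N) (Fin N) R)))) *
    (Matrix.fromBlocks 1 (ι • (1 : Matrix (Fin N) (Fin N) R)) 1
      (-(ι • (1 : Matrix (Fin N) (Fin N) R)))) =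
    (1 : Matrix (Fin N ⊕ Fin N) (Fin N ⊕ Fin N) R) := by
  rw [Matrix.fromBlocks_multiply, ← Matrix.fromBlocks_one]
  simp only [Matrix.smul_mul, Matrix.mul_smul, Matrix.mul_one, Matrix.one_mul,
    Matrix.mul_neg, Matrix.neg_mul, smul_neg, neg_neg]
  simp only [smul_comm ι ((2:ℝ)⁻¹), smul_smul ι ι, hι]
  simp only [neg_smul, one_smul, smul_neg, neg_neg, add_neg_cancel, neg_add_cancel]
  congr 1 <;> rw [← add_smul] <;> norm_num

private lemma Q_eq_aux (ι : R) (hι : ι * ι = -1) (A B Mm Mbar : Matrix (Fin N) (Fin N) R)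
    (h1 : A + ι • B = Mm) (h2 : A - ι • B = Mbar) :
    Matrix.fromBlocks 0 Mbar Mm 0 =
    (Matrix.fromBlocks 1 (ι • (1 : Matrix (Fin N) (Fin N) R)) 1
      (-(ι • (1 : Matrix (Fin N) (Fin N) R)))) *
    (Matrix.fromBlocks A (-B) (-B) (-A)) *
    (Matrix.fromBlocks ((2 : ℝ)⁻¹ • (1 : Matrix (Fin N) (Fin N) R))
      ((2 : ℝ)⁻¹ • (1 : Matrix (Fin N) (Fin N) R))
      (-((2 : ℝ)⁻¹ • (ι • (1 : Matrix (Fin N) (Fin N) R))))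
      ((2 : ℝ)⁻¹ • (ι • (1 : Matrix (Fin N) (Fin N) R)))) := by
  rw [← h1, ← h2, Matrix.fromBlocks_multiply, Matrix.fromBlocks_multiply]
  simp only [Matrix.smul_mul, Matrix.mul_smul, Matrix.mul_one, Matrix.one_mul,
    Matrix.mul_neg, Matrix.neg_mul, smul_neg, neg_neg, smul_add, smul_comm ι ((2:ℝ)⁻¹),
    smul_smul ι ι, hι, neg_smul, one_smul, neg_add]
  rw [Matrix.fromBlocks_inj]
  refine ⟨?_, ?_, ?_, ?_⟩ <;> generalize ι • B = C <;> module

end AuxGeneric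

lemma BC.i_mul_i : BC.i * BC.i = -1 := by
  simp [BC.i, Algebra.TensorProduct.tmul_mul_tmul, Complex.I_mul_I,
    Algebra.TensorProduct.one_def, TensorProduct.neg_tmul]

lemma BC.reim1 (b : BC) : BC.ReI b + BC.i * BC.ImI b = b := by
  have h : BC.i * ((BC.bar b - b) * BC.i) = b - BC.bar b := by
    linear_combination (BC.bar b - b) * BC.i_mul_i
  rw [BC.ReI, BC.ImI, mul_smul_comm, h, ← smul_add]
  rw [show b + BC.bar b + (b - BC.bar b) = (2:ℝ) • b by push_cast [two_smul]; ring]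
  rw [smul_smul]; norm_num

lemma BC.reim2 (b : BC) : BC.ReI b - BC.i * BC.ImI b = BC.bar b := by
  have h : BC.i * ((BC.bar b - b) * BC.i) = b - BC.bar b := by
    linear_combination (BC.bar b - b) * BC.i_mul_i
  rw [BC.ReI, BC.ImI, mul_smul_comm, h, ← smul_sub]
  rw [show b + BC.bar b - (b - BC.bar b) = (2:ℝ) • BC.bar b by push_cast [two_smul]; ring]
  rw [smul_smul]; norm_num

/-- With `Q = [[0, M̄],[M, 0]]`,
`R = [[Re^i(M), −Im^i(M)],[−Im^i(M), −Re^i(M)]]` and `F = [[I, iI],[I, −iI]]`: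
`F` is invertible with inverse `G = [[(1/2)I, (1/2)I],[−(i/2)I, (i/2)I]]`,
and `Q = F·R·F⁻¹`. -/
theorem Q_similar_R (N : ℕ) (hN : 0 < N) (M : Matrix (Fin N) (Fin N) BC)
    (Q R F G : Matrix (Fin N ⊕ Fin N) (Fin N ⊕ Fin N) BC)
    (hQ : Q = Matrix.fromBlocks 0 (M.map BC.bar) M 0)
    (hR : R = Matrix.fromBlocks (M.map BC.ReI) (-(M.map BC.ImI))
      (-(M.map BC.ImI)) (-(M.map BC.ReI)))
    (hF : F = Matrix.fromBlocks 1 (BC.i • (1 : Matrix (Fin N) (Fin N) BC)) 1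
      (-(BC.i • (1 : Matrix (Fin N) (Fin N) BC))))
    (hG : G = Matrix.fromBlocks ((2 : ℝ)⁻¹ • (1 : Matrix (Fin N) (Fin N) BC))
      ((2 : ℝ)⁻¹ • (1 : Matrix (Fin N) (Fin N) BC))
      (-((2 : ℝ)⁻¹ • (BC.i • (1 : Matrix (Fin N) (Fin N) BC))))
      ((2 : ℝ)⁻¹ • (BC.i • (1 : Matrix (Fin N) (Fin N) BC)))) :
    F * G = 1 ∧ G * F = 1 ∧ F⁻¹ = G ∧ Q = F * R * G := by
  have hFG : F * G = 1 := by rw [hF, hG]; exact FG_eq_one_aux BC.i BC.i_mul_i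
  have hGF : G * F = 1 := by rw [hF, hG]; exact GF_eq_one_aux BC.i BC.i_mul_i
  have hinv : F⁻¹ = G := Matrix.inv_eq_right_inv hFG
  refine ⟨hFG, hGF, hinv, ?_⟩
  have h1 : M.map BC.ReI + BC.i • M.map BC.ImI = M := by
    ext a b
    simpa [Matrix.add_apply, Matrix.smul_apply, Matrix.map_apply, smul_eq_mul]
      using BC.reim1 (M a b)
  have h2 : M.map BC.ReI - BC.i • M.map BC.ImI = M.map BC.bar := by
    ext a b
    simpa [Matrix.sub_apply, Matrix.smul_apply, Matrix.map_apply, smul_eq_mul]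
      using BC.reim2 (M a b)
  rw [hQ, hR, hF, hG]
  exact Q_eq_aux BC.i BC.i_mul_i _ _ _ _ h1 h2
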